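/- Under Efron's BCD(p), if j/2 < m_j ≤ j and n − m_j < n_1 ≤ n − j + m_j, then P(N_1(n) = n_1 | N_1(j) = m_j) = C(n−j, n_1−m_j) · p^{n−j−n_1+m_j} · q^{n_1−m_j}, where q = 1−p. -/

import Mathlib

open Finset

/-- Number of treatment-1 assignments among the first `j` patients. -/
def count1 {n : ℕ} (t : Fin n → Bool) (j : ℕ) : ℕ :=
  ((Finset.univ : Finset (Fin n)).filter (fun i : Fin n => (i : ℕ) < j ∧ t i = true)).card

/-- Probability of an assignment sequence under the restricted randomization
procedure `φ`, where `φ j m = P(T_{j+1} = 1 | N_1(j) = m)`. -/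
noncomputable def seqProb {n : ℕ} (φ : ℕ → ℕ → ℝ) (t : Fin n → Bool) : ℝ :=
  ∏ i : Fin n,
    if t i = true then φ (i : ℕ) (count1 t (i : ℕ)) else 1 - φ (i : ℕ) (count1 t (i : ℕ))

open Classical in
/-- Probability of an event under the randomization procedure `φ`. -/
noncomputable def pr {n : ℕ} (φ : ℕ → ℕ → ℝ) (S : Set (Fin n → Bool)) : ℝ :=
  ∑ t : Fin n → Bool, if t ∈ S then seqProb φ t else 0

/-- Conditional probability `P(A | B)` under the randomization procedure `φ`. -/
noncomputable def condPr {n : ℕ} (φ : ℕ → ℕ → ℝ) (A B : Set (Fin n → Bool)) : ℝ :=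
  pr φ (A ∩ B) / pr φ B

/-- Efron's biased coin design: `efron p j m = P(T_{j+1} = 1 | N_1(j) = m)`. -/
noncomputable def efron (p : ℝ) (j m : ℕ) : ℝ :=
  if 2 * m = j then 1/2 else if 2 * m < j then p else 1 - p

/-!
Conditionally on `N_1(j) = m`, the assignments after patient `j` are governed by the procedure
restarted from the state `(j, m)`, whatever the history that led there. On the event
`N_1(n) = n_1` the remaining `n - j` patients contain `n - j - (n_1 - m)` assignments to
treatment 0, and `n - m < n_1` makes this fewer than the imbalance `2m - j` at time `j`. Hence the
imbalance stays positive, every remaining patient receives treatment 1 with probability `q`, and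
the number of further treatment-1 assignments is binomial with parameters `n - j` and `q`.
-/

/-- The procedure governing patients `j + 1, j + 2, …` once `N_1(j) = m`. -/
def tailProc (φ : ℕ → ℕ → ℝ) (j m : ℕ) : ℕ → ℕ → ℝ :=
  fun i c => φ (j + i) (m + c)

lemma count1_self_eq_card {n : ℕ} (t : Fin n → Bool) :
    count1 t n = (univ.filter fun x => t x = true).card := by
  unfold count1
  congr 1
  exact filter_congr fun x _ => by simp [x.2]

lemma count1_le_add_sub {n : ℕ} (t : Fin n → Bool) (i k : ℕ) :
    count1 t k ≤ count1 t i + (k - i) := by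
  calc count1 t k ≤ count1 t i + (univ.filter fun x : Fin n => i ≤ x ∧ x < k).card := by
        refine (card_le_card fun x => ?_).trans (card_union_le _ _)
        simp only [mem_filter, mem_univ, true_and, mem_union]
        rintro ⟨hxk, htx⟩
        by_cases hxi : (x : ℕ) < i
        exacts [Or.inl ⟨hxi, htx⟩, Or.inr ⟨by omega, hxk⟩]
    _ ≤ count1 t i + (k - i) := by
        gcongr
        calc _ ≤ (Ico i k).card :=
              card_le_card_of_injOn Fin.val (fun x hx => by simpa using hx) Fin.val_injective.injOn
          _ = k - i := Nat.card_Ico i k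

section Append

variable {j k : ℕ}

lemma count1_append_of_le (u : Fin j → Bool) (v : Fin k → Bool) {i : ℕ} (hi : i ≤ j) :
    count1 (Fin.append u v) i = count1 u i := by
  simp only [count1, card_filter, Fin.sum_univ_add, Fin.append_left, Fin.append_right,
    Fin.val_castAdd, Fin.val_natAdd]
  rw [add_eq_left]
  exact sum_eq_zero fun x _ => if_neg fun h => by omega

lemma count1_append_add (u : Fin j → Bool) (v : Fin k → Bool) (i : ℕ) :
    count1 (Fin.append u v) (j + i) = count1 u j + count1 v i := by
  simp only [count1, card_filter, Fin.sum_univ_add, Fin.append_left, Fin.append_right,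
    Fin.val_castAdd, Fin.val_natAdd]
  congr 1
  · exact sum_congr rfl fun x _ => by simp [x.2, Nat.lt_add_right i x.2]
  · simp only [Nat.add_lt_add_iff_left]

lemma seqProb_append (φ : ℕ → ℕ → ℝ) (u : Fin j → Bool) (v : Fin k → Bool) :
    seqProb φ (Fin.append u v) = seqProb φ u * seqProb (tailProc φ j (count1 u j)) v := by
  simp only [seqProb, Fin.prod_univ_add, Fin.append_left, Fin.append_right, Fin.val_castAdd,
    Fin.val_natAdd, count1_append_add, tailProc]
  congr 1
  exact prod_congr rfl fun x _ => by rw [count1_append_of_le u v x.2.le]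

lemma pr_eq_sum_prefix (φ : ℕ → ℕ → ℝ) (S : Set (Fin (j + k) → Bool)) :
    pr φ S = ∑ u : Fin j → Bool,
      seqProb φ u * pr (tailProc φ j (count1 u j)) {v | Fin.append u v ∈ S} := by
  rw [pr, ← (Fin.appendEquiv j k).sum_comp, Fintype.sum_prod_type]
  refine sum_congr rfl fun u _ => ?_
  rw [pr, mul_sum]
  refine sum_congr rfl fun v _ => ?_
  simp only [Fin.appendEquiv, Equiv.coe_fn_mk, Set.mem_ofPred_eq, seqProb_append, mul_ite, mul_zero]
  congr

end Append

lemma pr_univ_fin_one (φ : ℕ → ℕ → ℝ) : pr φ (Set.univ : Set (Fin 1 → Bool)) = 1 := by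
  simp [pr, seqProb, count1, ← (Equiv.funUnique (Fin 1) Bool).symm.sum_comp]

lemma pr_univ (φ : ℕ → ℕ → ℝ) : ∀ {K : ℕ}, pr φ (Set.univ : Set (Fin K → Bool)) = 1
  | 0 => by simp [pr, seqProb]
  | K + 1 => by
      rw [pr_eq_sum_prefix (j := K) (k := 1)]
      simp only [Set.mem_univ, Set.ofPred_true, pr_univ_fin_one, mul_one]
      simpa [pr] using pr_univ φ (K := K)

theorem condPr_count1_prefix_eq {j k m : ℕ} (φ : ℕ → ℕ → ℝ) {A : Set (Fin (j + k) → Bool)}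
    {E : Set (Fin k → Bool)}
    (hA : ∀ u : Fin j → Bool, count1 u j = m → {v | Fin.append u v ∈ A} = E)
    (hB : pr φ {t : Fin (j + k) → Bool | count1 t j = m} ≠ 0) :
    condPr φ A {t | count1 t j = m} = pr (tailProc φ j m) E := by
  have hAB : pr φ (A ∩ {t | count1 t j = m})
      = pr (tailProc φ j m) E * pr φ {t : Fin (j + k) → Bool | count1 t j = m} := by
    rw [pr_eq_sum_prefix, pr_eq_sum_prefix, mul_sum]
    refine sum_congr rfl fun u _ => ?_
    simp only [Set.mem_inter_iff, Set.mem_ofPred_eq, count1_append_of_le u _ le_rfl]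
    by_cases hu : count1 u j = m
    · simp only [hu, and_true, Set.ofPred_true, pr_univ, hA u hu]
      ring
    · simp [hu, pr]
  rw [condPr, hAB, mul_div_cancel_right₀ _ hB]

lemma seqProb_eq_pow_of_forall {K : ℕ} (φ : ℕ → ℕ → ℝ) (q : ℝ) (v : Fin K → Bool)
    (h : ∀ i : Fin K, φ i (count1 v i) = q) :
    seqProb φ v = q ^ count1 v K * (1 - q) ^ (K - count1 v K) := by
  have hcompl := card_filter_add_card_filter_not (s := univ) fun x : Fin K => v x = true
  rw [card_univ, Fintype.card_fin] at hcompl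
  simp only [seqProb, h, prod_ite, prod_const, count1_self_eq_card]
  congr 2
  omega

lemma card_count1_eq_choose (K r : ℕ) :
    (univ.filter fun v : Fin K → Bool => count1 v K = r).card = K.choose r := by
  rw [← card_fin K, ← card_powersetCard, card_fin]
  refine card_nbij' (fun v => univ.filter fun x => v x = true) (fun s x => decide (x ∈ s))
    ?_ ?_ ?_ ?_
  · intro v hv
    simp_all [count1_self_eq_card]
  · intro s hs
    simp_all [count1_self_eq_card]
  · intro v _
    funext x
    simp
  · intro s _
    ext x
    simp

lemma pr_count1_eq_of_forall {K r : ℕ} (φ : ℕ → ℕ → ℝ) (q : ℝ)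
    (h : ∀ v : Fin K → Bool, count1 v K = r → ∀ i : Fin K, φ i (count1 v i) = q) :
    pr φ {v : Fin K → Bool | count1 v K = r} = K.choose r * q ^ r * (1 - q) ^ (K - r) := by
  calc pr φ {v : Fin K → Bool | count1 v K = r}
      = ∑ v ∈ univ.filter fun v : Fin K → Bool => count1 v K = r,
          q ^ r * (1 - q) ^ (K - r) := by
        rw [pr, sum_filter]
        refine sum_congr rfl fun v _ => ?_
        by_cases hv : count1 v K = r
        · simp [hv, seqProb_eq_pow_of_forall φ q v (h v hv)]
        · simp [hv]
    _ = K.choose r * q ^ r * (1 - q) ^ (K - r) := by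
        rw [sum_const, card_count1_eq_choose, nsmul_eq_mul, mul_assoc]

lemma efron_of_lt {p : ℝ} {j m : ℕ} (h : j < 2 * m) : efron p j m = 1 - p := by
  rw [efron, if_neg h.ne', if_neg h.not_gt]

theorem bcd_cond_dist_high_general (n j m n1 : ℕ) (p : ℝ) (hjn : j < n) (hm : m ≤ n1) (hlo : n - m < n1)
    (hpos : 0 < pr (efron p) {t : Fin n → Bool | count1 t j = m}) :
    condPr (efron p) {t : Fin n → Bool | count1 t n = n1}
        {t : Fin n → Bool | count1 t j = m}
      = ((n - j).choose (n1 - m) : ℝ) * p ^ (n - j - (n1 - m)) * (1 - p) ^ (n1 - m) := by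
  obtain ⟨k, rfl⟩ := Nat.exists_eq_add_of_le hjn.le
  rw [Nat.add_sub_cancel_left]
  have hsuffix : ∀ u : Fin j → Bool, count1 u j = m →
      {v | Fin.append u v ∈ {t : Fin (j + k) → Bool | count1 t (j + k) = n1}}
        = {v | count1 v k = n1 - m} := by
    intro u hu
    ext v
    simp only [Set.mem_ofPred_eq, count1_append_add, hu]
    omega
  have hq : ∀ v : Fin k → Bool, count1 v k = n1 - m →
      ∀ i : Fin k, tailProc (efron p) j m i (count1 v i) = 1 - p := by
    intro v hv i
    have := count1_le_add_sub v i k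
    exact efron_of_lt (by omega)
  rw [condPr_count1_prefix_eq (efron p) hsuffix hpos.ne', pr_count1_eq_of_forall _ _ hq,
    sub_sub_cancel]
  ring

/-- Theorem 2.2, part (3), last case: under Efron's BCD(p), if
`j/2 < m_j ≤ j` and `n − m_j < n_1 ≤ n − j + m_j` (with `m_j ≤ n_1`), then
`P(N_1(n)=n_1 | N_1(j)=m_j) = C(n−j, n_1−m_j) p^{n−j−n_1+m_j} q^{n_1−m_j}`. -/
theorem bcd_cond_dist_high (n j m n1 : ℕ) (p : ℝ) (hp : 1 / 2 ≤ p) (hp1 : p ≤ 1)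
    (hj1 : 1 ≤ j) (hjn : j < n) (hbal : j < 2 * m) (hmj : m ≤ j)
    (hm : m ≤ n1) (hlo : n - m < n1) (hhi : n1 ≤ n - j + m)
    (hpos : 0 < pr (efron p) {t : Fin n → Bool | count1 t j = m}) :
    condPr (efron p) {t : Fin n → Bool | count1 t n = n1}
        {t : Fin n → Bool | count1 t j = m}
      = ((n - j).choose (n1 - m) : ℝ) * p ^ (n - j - (n1 - m)) * (1 - p) ^ (n1 - m) :=
  bcd_cond_dist_high_general n j m n1 p hjn hm hlo hpos
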